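/- Let Ω ⊆ ℂ be open, let p : Ω → ℝ be a nonnegative measurable weight (e.g. subharmonic), let n ≥ 1, and let f : Ω → ℂ be polyanalytic of order n on Ω with ∫_Ω |∂̄^k f(z)|² e^{-p(z)} dλ(z) < ∞ for every k = 0, ..., n−1. If u : Ω → ℂ is a solution of ∂̄u = f on Ω satisfying the L² estimate ∫_Ω |u(z)|²/(1+|z|²)^{2n} e^{-p(z)} dλ(z) ≤ n Σ_{k=1}^{n} ∫_Ω |∂̄^{k−1} f(z)|² e^{-p(z)} dλ(z), then there exists a holomorphic function u₀ on Ω such that u(z) = u₀(z) − Σ_{k=1}^{n} ((−1)^k / k!) z̄^k ∂̄^{k−1}f(z) for all z ∈ Ω, and there exists a constant C(n) > 0 depending only on n such that ∫_Ω |u₀(z)|²/(1+|z|²)^{2n} e^{-p(z)} dλ(z) ≤ C(n) Σ_{k=0}^{n−1} ∫_Ω |∂̄^k f(z)|² e^{-p(z)} dλ(z). -/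

import Mathlib

/-!
With `b k = (-1)^k / k! * z̄^k * ∂̄^k f`, the Leibniz rule shows that `∂̄` maps the `k`-th summand
of `∑_{k=1}^n (-1)^k / k! * z̄^k * ∂̄^(k-1) f` to `b k - b (k-1)`. The sum telescopes to
`b n - f = -f`, as `∂̄^n f = 0`, so adding it to `u` kills `∂̄` and gives a holomorphic `u₀`.
Since `|z|^(2k) ≤ (1 + |z|^2)^(2n)` for `k ≤ n`, Cauchy–Schwarz over `n + 1` terms bounds
`|u₀|^2 (1 + |z|^2)^(-2n)` pointwise by `n + 1` times `|u|^2 (1 + |z|^2)^(-2n) + ∑ |∂̄^k f|^2`;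
integrating against `e^(-p)` and inserting the estimate on `u` gives `C(n) = (n + 1)^2`.
-/

open MeasureTheory

/-- The Wirtinger (Cauchy–Riemann) operator `∂̄u(z) = (1/2)(∂u/∂x + i ∂u/∂y)`. -/
noncomputable def dbar (u : ℂ → ℂ) (z : ℂ) : ℂ :=
  (1 / 2) * (fderiv ℝ u z 1 + Complex.I * fderiv ℝ u z Complex.I)

open Finset ComplexConjugate

theorem HasFDerivAt.dbar_eq {g : ℂ → ℂ} {L : ℂ →L[ℝ] ℂ} {z : ℂ} (h : HasFDerivAt g L z) :
    dbar g z = (1 / 2) * (L 1 + Complex.I * L Complex.I) := by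
  rw [dbar, h.fderiv]

section DbarCalculus

variable {a b : ℂ → ℂ} {z : ℂ}

theorem dbar_add (ha : DifferentiableAt ℝ a z) (hb : DifferentiableAt ℝ b z) :
    dbar (fun w => a w + b w) z = dbar a z + dbar b z := by
  rw [(ha.hasFDerivAt.fun_add hb.hasFDerivAt).dbar_eq, dbar, dbar]
  simp only [add_apply]
  ring

theorem dbar_mul (ha : DifferentiableAt ℝ a z) (hb : DifferentiableAt ℝ b z) :
    dbar (fun w => a w * b w) z = dbar a z * b z + a z * dbar b z := by
  rw [(ha.hasFDerivAt.fun_mul hb.hasFDerivAt).dbar_eq, dbar, dbar]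
  simp only [add_apply, smul_apply, smul_eq_mul]
  ring

theorem dbar_const_mul (c : ℂ) (ha : DifferentiableAt ℝ a z) :
    dbar (fun w => c * a w) z = c * dbar a z := by
  rw [(ha.hasFDerivAt.const_mul c).dbar_eq, dbar]
  simp only [smul_apply, smul_eq_mul]
  ring

theorem dbar_sum {ι : Type*} {s : Finset ι} {F : ι → ℂ → ℂ}
    (h : ∀ i ∈ s, DifferentiableAt ℝ (F i) z) :
    dbar (fun w => ∑ i ∈ s, F i w) z = ∑ i ∈ s, dbar (F i) z := by
  rw [(HasFDerivAt.fun_sum fun i hi => (h i hi).hasFDerivAt).dbar_eq]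
  simp only [dbar, FunLike.coe_sum, Finset.sum_apply, mul_sum, ← sum_add_distrib]

theorem dbar_conj_pow (m : ℕ) (z : ℂ) :
    dbar (fun w => conj w ^ m) z = m * conj z ^ (m - 1) := by
  have h : HasFDerivAt (fun w => conj w ^ m) _ z :=
    (Complex.conjCLE : ℂ →L[ℝ] ℂ).hasFDerivAt.pow m
  rw [h.dbar_eq]
  simp only [ContinuousLinearEquiv.coe_coe, ContinuousAlgEquiv.coeCLE_apply,
    Complex.conjCAE_apply, nsmul_eq_mul, smul_apply, map_one, smul_eq_mul, Complex.conj_I]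
  linear_combination (-(1 / 2) * m * conj z ^ (m - 1)) * Complex.I_mul_I

end DbarCalculus

theorem ContinuousLinearMap.eq_smul_one_of_apply_one_add_I_mul_apply_I {L : ℂ →L[ℝ] ℂ}
    (h : L 1 + Complex.I * L Complex.I = 0) : L = L 1 • (1 : ℂ →L[ℝ] ℂ) := by
  have hI : L Complex.I = Complex.I * L 1 := by
    linear_combination L Complex.I * Complex.I_mul_I - Complex.I * h
  ext1 v
  have hv : v = v.re • (1 : ℂ) + v.im • Complex.I := by simp [Complex.real_smul]
  rw [hv, map_add, map_smul, map_smul, hI]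
  simp only [Complex.real_smul, smul_apply, one_apply_eq_self, smul_eq_mul]
  ring

theorem differentiableAt_complex_of_dbar_eq_zero {g : ℂ → ℂ} {z : ℂ}
    (hg : DifferentiableAt ℝ g z) (h : dbar g z = 0) : DifferentiableAt ℂ g z := by
  have hL : (ContinuousLinearMap.toSpanSingleton ℂ (fderiv ℝ g z 1)).restrictScalars ℝ
      = fderiv ℝ g z := by
    rw [Complex.restrictScalars_toSpanSingleton]
    exact (ContinuousLinearMap.eq_smul_one_of_apply_one_add_I_mul_apply_I
      (by simpa [dbar] using h)).symm
  exact (hasFDerivAt_of_restrictScalars ℝ hg.hasFDerivAt hL).differentiableAt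

theorem contDiffOn_dbar {g : ℂ → ℂ} {Ω : Set ℂ} {m : WithTop ℕ∞} (hg : ContDiffOn ℝ (m + 1) g Ω)
    (hΩ : IsOpen Ω) : ContDiffOn ℝ m (dbar g) Ω := by
  have hD : ContDiffOn ℝ m (fderiv ℝ g) Ω := hg.fderiv_of_isOpen hΩ le_rfl
  exact contDiffOn_const.mul ((hD.clm_apply contDiffOn_const).add
    (contDiffOn_const.mul (hD.clm_apply contDiffOn_const)))

theorem contDiffOn_dbar_iterate {f : ℂ → ℂ} {Ω : Set ℂ} {m : ℕ} (k : ℕ)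
    (hf : ContDiffOn ℝ (k + m : ℕ) f Ω) (hΩ : IsOpen Ω) : ContDiffOn ℝ m (dbar^[k] f) Ω := by
  induction k generalizing m with
  | zero => simpa using hf
  | succ k ih =>
    rw [Function.iterate_succ_apply']
    exact contDiffOn_dbar (ih (m := m + 1) (by rwa [← add_assoc, add_right_comm])) hΩ

theorem differentiableAt_dbar_iterate {f : ℂ → ℂ} {Ω : Set ℂ} {n k : ℕ} {z : ℂ}
    (hf : ContDiffOn ℝ n f Ω) (hΩ : IsOpen Ω) (hz : z ∈ Ω) (hk : k < n) :
    DifferentiableAt ℝ (dbar^[k] f) z := by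
  obtain ⟨m, rfl⟩ := Nat.exists_eq_add_of_lt hk
  refine ((contDiffOn_dbar_iterate k (m := m + 1) hf hΩ).contDiffAt
    (hΩ.mem_nhds hz)).differentiableAt (by simp)

theorem sum_Icc_one_eq_sum_range {M : Type*} [AddCommMonoid M] (f : ℕ → M) (n : ℕ) :
    ∑ k ∈ Icc 1 n, f k = ∑ i ∈ range n, f (i + 1) := by
  rw [range_eq_Ico, sum_Ico_add' f 0 n 1, Ico_add_one_right_eq_Icc, zero_add]

noncomputable def dbarCorrection (n : ℕ) (f : ℂ → ℂ) (z : ℂ) : ℂ :=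
  ∑ k ∈ Icc 1 n, ((-1) ^ k / (k.factorial : ℂ)) * conj z ^ k * dbar^[k - 1] f z

section DbarCorrection

variable {n : ℕ} {f : ℂ → ℂ} {z : ℂ}

theorem dbar_conj_pow_mul_dbar_iterate (k : ℕ) (hf : DifferentiableAt ℝ (dbar^[k] f) z) :
    dbar (fun w => (-1) ^ (k + 1) / ((k + 1).factorial : ℂ) * conj w ^ (k + 1) * dbar^[k] f w) z
      = (-1) ^ (k + 1) / ((k + 1).factorial : ℂ) * conj z ^ (k + 1) * dbar^[k + 1] f z
        - (-1) ^ k / (k.factorial : ℂ) * conj z ^ k * dbar^[k] f z := by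
  have hconj : DifferentiableAt ℝ (fun w => conj w ^ (k + 1)) z := by fun_prop
  simp only [mul_assoc]
  rw [dbar_const_mul _ (hconj.fun_mul hf), dbar_mul hconj hf, dbar_conj_pow,
    Function.iterate_succ_apply' dbar k f, Nat.factorial_succ]
  push_cast
  field_simp
  ring

theorem dbarCorrection_eq_sum_range (n : ℕ) (f : ℂ → ℂ) :
    dbarCorrection n f = fun w => ∑ k ∈ range n,
      (-1) ^ (k + 1) / ((k + 1).factorial : ℂ) * conj w ^ (k + 1) * dbar^[k] f w := by
  funext w
  simp only [dbarCorrection, sum_Icc_one_eq_sum_range, Nat.add_sub_cancel]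

theorem differentiableAt_dbarCorrection (hf : ∀ k < n, DifferentiableAt ℝ (dbar^[k] f) z) :
    DifferentiableAt ℝ (dbarCorrection n f) z := by
  rw [dbarCorrection_eq_sum_range]
  exact DifferentiableAt.fun_sum fun k hk => by
    have := hf k (mem_range.mp hk)
    fun_prop

theorem dbar_dbarCorrection (hf : ∀ k < n, DifferentiableAt ℝ (dbar^[k] f) z) :
    dbar (dbarCorrection n f) z
      = (-1) ^ n / (n.factorial : ℂ) * conj z ^ n * dbar^[n] f z - f z := by
  rw [dbarCorrection_eq_sum_range,
    dbar_sum fun k hk => by have := hf k (mem_range.mp hk); fun_prop,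
    sum_congr rfl fun k hk => dbar_conj_pow_mul_dbar_iterate k (hf k (mem_range.mp hk)),
    sum_range_sub (fun k => (-1) ^ k / (k.factorial : ℂ) * conj z ^ k * dbar^[k] f z)]
  simp

end DbarCorrection

theorem differentiableOn_add_dbarCorrection {n : ℕ} {f u : ℂ → ℂ} {Ω : Set ℂ} (hΩ : IsOpen Ω)
    (hf : ContDiffOn ℝ n f Ω) (hpoly : ∀ z ∈ Ω, dbar^[n] f z = 0) (hu : DifferentiableOn ℝ u Ω)
    (hdu : ∀ z ∈ Ω, dbar u z = f z) :
    DifferentiableOn ℂ (fun w => u w + dbarCorrection n f w) Ω := by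
  intro z hz
  have hdf : ∀ k < n, DifferentiableAt ℝ (dbar^[k] f) z := fun k hk =>
    differentiableAt_dbar_iterate hf hΩ hz hk
  have hud : DifferentiableAt ℝ u z := hu.differentiableAt (hΩ.mem_nhds hz)
  have hcd := differentiableAt_dbarCorrection hdf
  refine (differentiableAt_complex_of_dbar_eq_zero (hud.fun_add hcd) ?_).differentiableWithinAt
  rw [dbar_add hud hcd, dbar_dbarCorrection hdf, hdu z hz, hpoly z hz]
  ring

theorem norm_dbarCorrection_le (n : ℕ) (f : ℂ → ℂ) (z : ℂ) :
    ‖dbarCorrection n f z‖ ≤ ∑ k ∈ Icc 1 n, ‖z‖ ^ k * ‖dbar^[k - 1] f z‖ := by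
  refine (norm_sum_le _ _).trans (sum_le_sum fun k _ => ?_)
  have hcoef : ‖(-1) ^ k / (k.factorial : ℂ)‖ ≤ 1 := by
    simpa [norm_div] using inv_le_one_of_one_le₀ (Nat.one_le_cast.mpr k.factorial_pos)
  calc ‖(-1) ^ k / (k.factorial : ℂ) * conj z ^ k * dbar^[k - 1] f z‖
      = ‖(-1) ^ k / (k.factorial : ℂ)‖ * (‖z‖ ^ k * ‖dbar^[k - 1] f z‖) := by
        rw [norm_mul, norm_mul, norm_pow, Complex.norm_conj, mul_assoc]
    _ ≤ ‖z‖ ^ k * ‖dbar^[k - 1] f z‖ := mul_le_of_le_one_left (by positivity) hcoef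

theorem sq_add_sum_le {ι : Type*} (s : Finset ι) (a : ℝ) (c : ι → ℝ) :
    (a + ∑ i ∈ s, c i) ^ 2 ≤ (#s + 1) * (a ^ 2 + ∑ i ∈ s, c i ^ 2) := by
  have := sq_sum_le_card_mul_sum_sq (s := s.insertNone) (f := fun i => i.elim a c)
  simpa [sum_insertNone] using this

theorem sq_div_le_of_le_add_sum {ι : Type*} (s : Finset ι) (e : ι → ℕ) {m : ℕ}
    (he : ∀ i ∈ s, e i ≤ m) {t a x : ℝ} (b : ι → ℝ) (ht : 0 ≤ t)
    (h : t ≤ a + ∑ i ∈ s, x ^ e i * b i) :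
    t ^ 2 / (1 + x ^ 2) ^ m ≤ (#s + 1) * (a ^ 2 / (1 + x ^ 2) ^ m + ∑ i ∈ s, b i ^ 2) := by
  have hq : 0 < (1 + x ^ 2) ^ m := by positivity
  have hpow : ∀ i ∈ s, (x ^ e i * b i) ^ 2 ≤ (1 + x ^ 2) ^ m * b i ^ 2 := fun i hi => by
    rw [mul_pow, ← pow_mul, mul_comm (e i), pow_mul]
    gcongr
    calc (x ^ 2) ^ e i ≤ (1 + x ^ 2) ^ e i := by gcongr; linarith
      _ ≤ (1 + x ^ 2) ^ m := pow_le_pow_right₀ (by nlinarith) (he i hi)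
  rw [div_le_iff₀ hq]
  calc t ^ 2 ≤ (a + ∑ i ∈ s, x ^ e i * b i) ^ 2 := pow_le_pow_left₀ ht h 2
    _ ≤ (#s + 1) * (a ^ 2 + ∑ i ∈ s, (x ^ e i * b i) ^ 2) := sq_add_sum_le s a _
    _ ≤ (#s + 1) * (a ^ 2 + ∑ i ∈ s, (1 + x ^ 2) ^ m * b i ^ 2) := by
        gcongr with i hi; exact hpow i hi
    _ = _ := by rw [← mul_sum]; field_simp

theorem sq_norm_div_mul_le_of_norm_le_add_norm_dbarCorrection {n : ℕ} {f : ℂ → ℂ} {z s t : ℂ}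
    {w : ℝ} (hw : 0 ≤ w) (hst : ‖s‖ ≤ ‖t‖ + ‖dbarCorrection n f z‖) :
    ‖s‖ ^ 2 / (1 + ‖z‖ ^ 2) ^ (2 * n) * w ≤ (n + 1) * (‖t‖ ^ 2 / (1 + ‖z‖ ^ 2) ^ (2 * n) * w
      + ∑ k ∈ Icc 1 n, ‖dbar^[k - 1] f z‖ ^ 2 * w) := by
  have h := sq_div_le_of_le_add_sum (Icc 1 n) id (m := 2 * n)
    (fun k hk => by simp only [mem_Icc] at hk; simp only [id]; omega)
    (fun k => ‖dbar^[k - 1] f z‖) (norm_nonneg s)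
    (hst.trans (by gcongr; exact norm_dbarCorrection_le n f z))
  rw [Nat.card_Icc, Nat.add_sub_cancel] at h
  calc _ ≤ (n + 1) * (‖t‖ ^ 2 / (1 + ‖z‖ ^ 2) ^ (2 * n)
        + ∑ k ∈ Icc 1 n, ‖dbar^[k - 1] f z‖ ^ 2) * w := mul_le_mul_of_nonneg_right h hw
    _ = _ := by rw [← sum_mul]; ring

theorem integral_le_mul_integral_add {α : Type*} [MeasurableSpace α] {μ : Measure α}
    {A B H : α → ℝ} {c : ℝ} (hc : 0 ≤ c) (hA : AEStronglyMeasurable A μ)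
    (hB : AEStronglyMeasurable B μ) (hA0 : ∀ x, 0 ≤ A x) (hB0 : ∀ x, 0 ≤ B x)
    (hH : Integrable H μ) (hH0 : ∀ x, 0 ≤ H x) (hAB : ∀ x, A x ≤ c * (B x + H x))
    (hBA : ∀ x, B x ≤ c * (A x + H x)) :
    ∫ x, A x ∂μ ≤ c * (∫ x, B x ∂μ + ∫ x, H x ∂μ) := by
  by_cases hBi : Integrable B μ
  · have hdom : Integrable (fun x => c * (B x + H x)) μ := (hBi.add hH).const_mul c
    have hAi : Integrable A μ := hdom.mono' hA <| ae_of_all _ fun x => by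
      simpa only [Real.norm_of_nonneg (hA0 x)] using hAB x
    calc ∫ x, A x ∂μ ≤ ∫ x, c * (B x + H x) ∂μ := integral_mono hAi hdom hAB
      _ = c * (∫ x, B x ∂μ + ∫ x, H x ∂μ) := by rw [integral_const_mul, integral_add hBi hH]
  · -- Here `∫ B` is the junk value `0`; `hBA` shows that `A` is not integrable either.
    have hAi : ¬ Integrable A μ := fun hAi => hBi <| ((hAi.add hH).const_mul c).mono' hB <|
      ae_of_all _ fun x => by simpa only [Real.norm_of_nonneg (hB0 x), Pi.add_apply] using hBA x
    rw [integral_undef hAi]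
    exact mul_nonneg hc (add_nonneg (integral_nonneg hB0) (integral_nonneg hH0))

theorem ContinuousOn.aestronglyMeasurable_sq_norm_div_mul {v : ℂ → ℂ} {Ω : Set ℂ} {w : ℂ → ℝ}
    (hv : ContinuousOn v Ω) (hΩ : MeasurableSet Ω) (hw : Measurable w) (m : ℕ) :
    AEStronglyMeasurable (fun z => ‖v z‖ ^ 2 / (1 + ‖z‖ ^ 2) ^ m * w z) (volume.restrict Ω) :=
  (((hv.norm.pow 2).div (by fun_prop : Continuous fun z : ℂ => (1 + ‖z‖ ^ 2) ^ m).continuousOn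
    fun z _ => by positivity).aestronglyMeasurable hΩ).mul hw.aestronglyMeasurable

theorem integral_sq_norm_add_dbarCorrection_le {n : ℕ} {f u : ℂ → ℂ} {Ω : Set ℂ} {p : ℂ → ℝ}
    (hΩ : IsOpen Ω) (hp : Measurable p) (hf : ContDiffOn ℝ n f Ω)
    (hint : ∀ k < n, IntegrableOn (fun z => ‖dbar^[k] f z‖ ^ 2 * Real.exp (-(p z))) Ω)
    (hu : ContinuousOn u Ω) :
    ∫ z in Ω, ‖u z + dbarCorrection n f z‖ ^ 2 / (1 + ‖z‖ ^ 2) ^ (2 * n) * Real.exp (-(p z))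
      ≤ (n + 1) * ((∫ z in Ω, ‖u z‖ ^ 2 / (1 + ‖z‖ ^ 2) ^ (2 * n) * Real.exp (-(p z)))
        + ∑ k ∈ range n, ∫ z in Ω, ‖dbar^[k] f z‖ ^ 2 * Real.exp (-(p z))) := by
  have hint' : ∀ k ∈ Icc 1 n,
      IntegrableOn (fun z => ‖dbar^[k - 1] f z‖ ^ 2 * Real.exp (-(p z))) Ω := fun k hk =>
    hint (k - 1) (by simp only [mem_Icc] at hk; omega)
  have hu₀ : ContinuousOn (fun z => u z + dbarCorrection n f z) Ω :=
    hu.add fun z hz => (differentiableAt_dbarCorrection fun k hk =>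
      differentiableAt_dbar_iterate hf hΩ hz hk).continuousAt.continuousWithinAt
  have h := integral_le_mul_integral_add (μ := volume.restrict Ω) (by positivity)
    (hu₀.aestronglyMeasurable_sq_norm_div_mul hΩ.measurableSet (by fun_prop) (2 * n))
    (hu.aestronglyMeasurable_sq_norm_div_mul hΩ.measurableSet (by fun_prop) (2 * n))
    (fun z => by positivity) (fun z => by positivity) (integrable_finsetSum _ hint')
    (fun z => by positivity)
    (fun z => sq_norm_div_mul_le_of_norm_le_add_norm_dbarCorrection (Real.exp_nonneg _)
      (norm_add_le _ _))
    (fun z => sq_norm_div_mul_le_of_norm_le_add_norm_dbarCorrection (Real.exp_nonneg _)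
      (by simpa using norm_sub_le (u z + dbarCorrection n f z) (dbarCorrection n f z)))
  rwa [integral_finsetSum _ hint', sum_Icc_one_eq_sum_range] at h

theorem stmt_9_general (n : ℕ) :
    ∃ C : ℝ, 0 < C ∧
      ∀ (Ω : Set ℂ), IsOpen Ω → ∀ p : ℂ → ℝ, Measurable p → (∀ z ∈ Ω, 0 ≤ p z) →
      ∀ f : ℂ → ℂ, ContDiffOn ℝ n f Ω → (∀ z ∈ Ω, dbar^[n] f z = 0) →
      (∀ k < n, IntegrableOn (fun z => ‖dbar^[k] f z‖ ^ 2 * Real.exp (-(p z))) Ω) →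
      ∀ u : ℂ → ℂ, ContDiffOn ℝ (n + 1 : ℕ) u Ω → (∀ z ∈ Ω, dbar u z = f z) →
      (∫ z in Ω, ‖u z‖ ^ 2 / (1 + ‖z‖ ^ 2) ^ (2 * n) * Real.exp (-(p z))) ≤
        n * ∑ k ∈ Finset.Icc 1 n, ∫ z in Ω, ‖dbar^[k - 1] f z‖ ^ 2 * Real.exp (-(p z)) →
      ∃ u₀ : ℂ → ℂ, DifferentiableOn ℂ u₀ Ω ∧
        (∀ z ∈ Ω, u z = u₀ z - ∑ k ∈ Finset.Icc 1 n,
          ((-1) ^ k / (k.factorial : ℂ)) * (starRingEnd ℂ) z ^ k * dbar^[k - 1] f z) ∧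
        (∫ z in Ω, ‖u₀ z‖ ^ 2 / (1 + ‖z‖ ^ 2) ^ (2 * n) * Real.exp (-(p z))) ≤
          C * ∑ k ∈ Finset.range n, ∫ z in Ω, ‖dbar^[k] f z‖ ^ 2 * Real.exp (-(p z)) := by
  refine ⟨(n + 1) ^ 2, by positivity, ?_⟩
  intro Ω hΩ p hp _ f hf hpoly hint u hu hdu hest
  have hud : DifferentiableOn ℝ u Ω := hu.differentiableOn (by simp)
  refine ⟨fun z => u z + dbarCorrection n f z,
    differentiableOn_add_dbarCorrection hΩ hf hpoly hud hdu,
    fun z _ => (add_sub_cancel_right _ _).symm, ?_⟩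
  simp only [sum_Icc_one_eq_sum_range, Nat.add_sub_cancel] at hest
  set I := ∑ k ∈ range n, ∫ z in Ω, ‖dbar^[k] f z‖ ^ 2 * Real.exp (-(p z))
  calc _ ≤ (n + 1) * ((∫ z in Ω, ‖u z‖ ^ 2 / (1 + ‖z‖ ^ 2) ^ (2 * n) * Real.exp (-(p z))) + I) :=
        integral_sq_norm_add_dbarCorrection_le hΩ hp hf hint hud.continuousOn
    _ ≤ (n + 1) * (n * I + I) := by gcongr
    _ = (n + 1) ^ 2 * I := by ring

theorem stmt_9 (n : ℕ) (hn : 1 ≤ n) :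
    ∃ C : ℝ, 0 < C ∧
      ∀ (Ω : Set ℂ), IsOpen Ω → ∀ p : ℂ → ℝ, Measurable p → (∀ z ∈ Ω, 0 ≤ p z) →
      ∀ f : ℂ → ℂ, ContDiffOn ℝ n f Ω → (∀ z ∈ Ω, dbar^[n] f z = 0) →
      (∀ k < n, IntegrableOn (fun z => ‖dbar^[k] f z‖ ^ 2 * Real.exp (-(p z))) Ω) →
      ∀ u : ℂ → ℂ, ContDiffOn ℝ (n + 1 : ℕ) u Ω → (∀ z ∈ Ω, dbar u z = f z) →
      (∫ z in Ω, ‖u z‖ ^ 2 / (1 + ‖z‖ ^ 2) ^ (2 * n) * Real.exp (-(p z))) ≤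
        n * ∑ k ∈ Finset.Icc 1 n, ∫ z in Ω, ‖dbar^[k - 1] f z‖ ^ 2 * Real.exp (-(p z)) →
      ∃ u₀ : ℂ → ℂ, DifferentiableOn ℂ u₀ Ω ∧
        (∀ z ∈ Ω, u z = u₀ z - ∑ k ∈ Finset.Icc 1 n,
          ((-1) ^ k / (k.factorial : ℂ)) * (starRingEnd ℂ) z ^ k * dbar^[k - 1] f z) ∧
        (∫ z in Ω, ‖u₀ z‖ ^ 2 / (1 + ‖z‖ ^ 2) ^ (2 * n) * Real.exp (-(p z))) ≤
          C * ∑ k ∈ Finset.range n, ∫ z in Ω, ‖dbar^[k] f z‖ ^ 2 * Real.exp (-(p z)) :=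
  stmt_9_general n
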